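/- arXiv:1910.06093 — 7 statements merged into one kernel-verified Lean document; each statement's English description precedes it below -/
import Mathlib

section
/- Let f and g be probability density functions on ℝ that are each unimodal and symmetric about 0. Then the convolution f * g is also unimodal and symmetric about 0. -/
open MeasureTheory

/-- A function on ℝ is symmetric about 0 and unimodal (with mode 0):
even, nondecreasing on `(-∞,0]` and nonincreasing on `[0,∞)`. -/
def SymmetricUnimodal (f : ℝ → ℝ) : Prop :=
  (∀ x, f (-x) = f x) ∧ MonotoneOn f (Set.Iic 0) ∧ AntitoneOn f (Set.Ici 0)

/-!
For `0 ≤ x ≤ y` write `h` for the convolution. Reflecting the integration variable in the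
midpoint `(x + y) / 2` and using that `g` is even gives two expressions for `h x - h y`, whose
sum is `∫ (f t - f (x + y - t)) * (g (x - t) - g (y - t))`. Both factors have the sign of
`x + y - 2 t`, because `f` and `g` decrease with the absolute value of their argument, so the
integrand is nonnegative.
-/

namespace SymmetricUnimodal

variable {f g : ℝ → ℝ}

theorem of_antitoneOn (he : ∀ x, f (-x) = f x) (ha : AntitoneOn f (Set.Ici 0)) :
    SymmetricUnimodal f := by
  refine ⟨he, fun x hx y hy hxy => ?_, ha⟩
  rw [← he x, ← he y]
  exact ha (show 0 ≤ -y from neg_nonneg.2 hy) (show 0 ≤ -x from neg_nonneg.2 hx)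
    (neg_le_neg hxy)

theorem apply_le_apply_of_sq_le_sq (hf : SymmetricUnimodal f) {a b : ℝ} (h : a ^ 2 ≤ b ^ 2) :
    f b ≤ f a := by
  obtain ⟨he, -, ha⟩ := hf
  have habs : ∀ z, f |z| = f z := fun z => by
    rcases abs_choice z with hz | hz <;> simp only [hz, he]
  rw [← habs a, ← habs b]
  exact ha (abs_nonneg a) (abs_nonneg b) (sq_le_sq.1 h)

theorem apply_le_apply_zero (hf : SymmetricUnimodal f) (t : ℝ) : f t ≤ f 0 :=
  hf.apply_le_apply_of_sq_le_sq (by simpa using sq_nonneg t)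

theorem mul_sub_reflect_nonneg (hf : SymmetricUnimodal f) (hg : SymmetricUnimodal g)
    {x y : ℝ} (hx : 0 ≤ x) (hxy : x ≤ y) (t : ℝ) :
    0 ≤ (f t - f (x + y - t)) * (g (x - t) - g (y - t)) := by
  rcases le_total t ((x + y) / 2) with ht | ht
  · have hf' : f (x + y - t) ≤ f t := hf.apply_le_apply_of_sq_le_sq (by nlinarith)
    have hg' : g (y - t) ≤ g (x - t) := hg.apply_le_apply_of_sq_le_sq (by nlinarith)
    exact mul_nonneg (sub_nonneg.2 hf') (sub_nonneg.2 hg')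
  · have hf' : f t ≤ f (x + y - t) := hf.apply_le_apply_of_sq_le_sq (by nlinarith)
    have hg' : g (x - t) ≤ g (y - t) := hg.apply_le_apply_of_sq_le_sq (by nlinarith)
    exact mul_nonneg_of_nonpos_of_nonpos (sub_nonpos.2 hf') (sub_nonpos.2 hg')

end SymmetricUnimodal

section Convolution

variable {f g : ℝ → ℝ}

theorem integral_mul_comp_sub_neg (hf : ∀ x, f (-x) = f x) (hg : ∀ x, g (-x) = g x) (x : ℝ) :
    ∫ t, f t * g (-x - t) = ∫ t, f t * g (x - t) := by
  rw [← integral_neg_eq_self]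
  congr 1 with t
  rw [hf, show -x - -t = -(x - t) by ring, hg]

theorem mul_comp_sub_reflect (hg : ∀ x, g (-x) = g x) (x y t : ℝ) :
    f (x + y - t) * g (y - (x + y - t)) = f (x + y - t) * g (x - t) := by
  rw [show y - (x + y - t) = -(x - t) by ring, hg]

theorem integral_mul_comp_sub_reflect (hg : ∀ x, g (-x) = g x) (x y : ℝ) :
    ∫ t, f t * g (y - t) = ∫ t, f (x + y - t) * g (x - t) := by
  rw [← integral_sub_left_eq_self _ volume (x + y)]
  exact integral_congr_ae (ae_of_all _ fun t => mul_comp_sub_reflect hg x y t)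

theorem antitoneOn_integral_mul_comp_sub (hf : SymmetricUnimodal f) (hg : SymmetricUnimodal g)
    (hi : ∀ x, Integrable fun t => f t * g (x - t)) :
    AntitoneOn (fun x => ∫ t, f t * g (x - t)) (Set.Ici 0) := by
  intro x hx y _ hxy
  have hi' : ∀ x y, Integrable fun t => f (x + y - t) * g (x - t) := fun x y =>
    ((hi y).comp_sub_left (x + y)).congr (ae_of_all _ (mul_comp_sub_reflect hg.1 x y))
  have key : 0 ≤ ∫ t, ((f t * g (x - t) - f (x + y - t) * g (x - t)) +
      (f (y + x - t) * g (y - t) - f t * g (y - t))) := by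
    refine integral_nonneg fun t => ?_
    show 0 ≤ _
    have := hf.mul_sub_reflect_nonneg hg hx hxy t
    rw [add_comm y x]
    linarith
  rw [integral_add (by exact (hi x).sub (hi' x y)) (by exact (hi' y x).sub (hi y)),
    integral_sub (hi x) (hi' x y), integral_sub (hi' y x) (hi y),
    ← integral_mul_comp_sub_reflect hg.1, ← integral_mul_comp_sub_reflect hg.1] at key
  show ∫ t, f t * g (y - t) ≤ ∫ t, f t * g (x - t)
  linarith

end Convolution

theorem convolution_symmetricUnimodal_general (f g : ℝ → ℝ)
    (hf0 : ∀ x, 0 ≤ f x)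
    (hfi : Integrable f) (hgi : Integrable g)
    (hf : SymmetricUnimodal f) (hg : SymmetricUnimodal g) :
    SymmetricUnimodal (fun x => ∫ t, f t * g (x - t)) := by
  have hi : ∀ x, Integrable fun t => f t * g (x - t) := fun x =>
    (hgi.comp_sub_left x).bdd_mul hfi.aestronglyMeasurable
      (ae_of_all _ fun t => by
        rw [Real.norm_of_nonneg (hf0 t)]
        exact hf.apply_le_apply_zero t)
  exact .of_antitoneOn (integral_mul_comp_sub_neg hf.1 hg.1)
    (antitoneOn_integral_mul_comp_sub hf hg hi)

/-- The convolution of two unimodal probability densities that are symmetric about 0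
is again unimodal and symmetric about 0. -/
theorem convolution_symmetricUnimodal (f g : ℝ → ℝ)
    (hf0 : ∀ x, 0 ≤ f x) (hg0 : ∀ x, 0 ≤ g x)
    (hfi : Integrable f) (hgi : Integrable g)
    (hf1 : ∫ x, f x = 1) (hg1 : ∫ x, g x = 1)
    (hf : SymmetricUnimodal f) (hg : SymmetricUnimodal g) :
    SymmetricUnimodal (fun x => ∫ t, f t * g (x - t)) :=
  convolution_symmetricUnimodal_general f g hf0 hfi hgi hf hg
end

section
/- Suppose a node computes the majority of n_i independent sign estimates, each correct with probability p_idv = 1 - q_idv where q_idv ≤ max(2/(9S²), 1/2 - S/(2√3)) for some S > 0 (so p_idv > 1/2). Then the probability that the majority is wrong is at most exp(-n_i · S²/(2(S² + 4))). -/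
open MeasureTheory ProbabilityTheory

/-! The majority is wrong iff the number of successes falls `n (p - 1/2)` below its mean `n p`,
which Hoeffding's inequality bounds by `exp (-2 n (p - 1/2)²)`. The SNR condition on `q` gives
`(2p - 1)² ≥ S² / (S² + 4)`, i.e. `1 / (4 (p - 1/2)²) - 1 ≤ 4 / S²`, which turns this exponent
into the claimed one. -/

theorem measureReal_sum_le_sub_le_of_mem_Icc_zero_one {Ω ι : Type*} [MeasurableSpace Ω]
    {μ : Measure Ω} [IsProbabilityMeasure μ] [Fintype ι] {X : ι → Ω → ℝ}
    (hindep : iIndepFun X μ) (hmeas : ∀ i, AEMeasurable (X i) μ)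
    (hbound : ∀ i, ∀ᵐ ω ∂μ, X i ω ∈ Set.Icc 0 1) {t : ℝ} (ht : 0 ≤ t) :
    μ.real {ω | ∑ i, X i ω ≤ ∑ i, μ[X i] - Fintype.card ι * t} ≤
      Real.exp (-(2 * Fintype.card ι * t ^ 2)) := by
  set Y : ι → Ω → ℝ := fun i ω ↦ -(X i ω - μ[X i])
  have hsubG : ∀ i ∈ Finset.univ, HasSubgaussianMGF (Y i) ((‖(1 : ℝ) - 0‖₊ / 2) ^ 2) μ :=
    fun i _ ↦ (hasSubgaussianMGF_of_mem_Icc (hmeas i) (hbound i)).neg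
  have hindepY : iIndepFun Y μ :=
    hindep.comp (fun i (x : ℝ) ↦ -(x - ∫ ω, X i ω ∂μ)) fun _ ↦ by fun_prop
  have hHoeffding := HasSubgaussianMGF.measure_sum_ge_le_of_iIndepFun hindepY hsubG
    (mul_nonneg (Nat.cast_nonneg (Fintype.card ι)) ht)
  convert hHoeffding using 3
  · ext ω
    simp only [Y, Finset.sum_neg_distrib, Finset.sum_sub_distrib]
    constructor <;> intro h <;> linarith
  · simp only [nnnorm_one, sub_zero, Finset.sum_const, Finset.card_univ, nsmul_eq_mul]
    push_cast
    field_simp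

theorem integral_eq_measureReal_of_forall_eq_zero_or_eq_one {Ω : Type*} [MeasurableSpace Ω]
    {μ : Measure Ω} {X : Ω → ℝ} (hX : Measurable X) (hval : ∀ ω, X ω = 0 ∨ X ω = 1) :
    μ[X] = μ.real {ω | X ω = 1} := by
  have hind : X = {ω | X ω = 1}.indicator 1 := by
    ext ω
    rcases hval ω with h | h <;> simp [h]
  conv_lhs => rw [hind]
  exact integral_indicator_one (hX (measurableSet_singleton 1))

theorem one_sub_two_mul_nonneg_and_sq_div_le {S q : ℝ} (hS : 0 < S)
    (hq1 : 2 / Real.sqrt 3 < S → q ≤ 2 / (9 * S ^ 2))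
    (hq2 : S ≤ 2 / Real.sqrt 3 → q ≤ 1 / 2 - S / (2 * Real.sqrt 3)) :
    0 ≤ 1 - 2 * q ∧ S ^ 2 / (S ^ 2 + 4) ≤ (1 - 2 * q) ^ 2 := by
  have hsqrt3 : 0 < Real.sqrt 3 := by positivity
  have hsq3 : Real.sqrt 3 ^ 2 = 3 := Real.sq_sqrt (by norm_num)
  rw [div_le_iff₀ (by positivity)]
  rcases le_or_gt S (2 / Real.sqrt 3) with hsmall | hlarge
  · have hq : S / Real.sqrt 3 ≤ 1 - 2 * q := by
      have := hq2 hsmall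
      rw [div_mul_eq_div_div_swap] at this
      linarith
    have hS3 : S ^ 2 / 3 ≤ (1 - 2 * q) ^ 2 := by
      rw [← hsq3, ← div_pow]
      exact pow_le_pow_left₀ (by positivity) hq 2
    refine ⟨(by positivity : 0 ≤ S / Real.sqrt 3).trans hq, ?_⟩
    nlinarith
  · have hS2 : 4 / 3 < S ^ 2 := by
      have := pow_lt_pow_left₀ hlarge (by positivity) two_ne_zero
      rw [div_pow, hsq3] at this
      linarith
    have hq : 1 - 4 / (9 * S ^ 2) ≤ 1 - 2 * q := by
      have := hq1 hlarge
      linarith [show 4 / (9 * S ^ 2) = 2 * (2 / (9 * S ^ 2)) by ring]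
    have hpos : 2 / 3 ≤ 1 - 4 / (9 * S ^ 2) := by
      rw [le_sub_comm, div_le_iff₀ (by positivity)]
      nlinarith
    refine ⟨by linarith, ?_⟩
    have key : S ^ 2 ≤ (1 - 4 / (9 * S ^ 2)) ^ 2 * (S ^ 2 + 4) := by
      rw [one_sub_div (by positivity), div_pow, div_mul_eq_mul_div, le_div_iff₀ (by positivity)]
      nlinarith
    nlinarith [pow_le_pow_left₀ (by linarith) hq 2]

theorem local_majority_error_general
    {Ω : Type*} [MeasurableSpace Ω] (μ : Measure Ω) [IsProbabilityMeasure μ]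
    (ni : ℕ) (S q p : ℝ) (hS : 0 < S)
    (hq1 : 2 / Real.sqrt 3 < S → q ≤ 2 / (9 * S ^ 2))
    (hq2 : S ≤ 2 / Real.sqrt 3 → q ≤ 1 / 2 - S / (2 * Real.sqrt 3))
    (hp : p = 1 - q)
    (X : Fin ni → Ω → ℝ)
    (hmeas : ∀ i, Measurable (X i))
    (hindep : iIndepFun X μ)
    (hval : ∀ i ω, X i ω = 0 ∨ X i ω = 1)
    (hbern : ∀ i, μ {ω | X i ω = 1} = ENNReal.ofReal p) :
    (μ {ω | (∑ i, X i ω) ≤ (ni : ℝ) / 2}).toReal ≤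
      Real.exp (-((ni : ℝ) * S ^ 2 / (2 * (S ^ 2 + 4)))) := by
  obtain ⟨hmargin, hsnr⟩ := one_sub_two_mul_nonneg_and_sq_div_le hS hq1 hq2
  have hmean : ∀ i, μ[X i] = p := fun i ↦ by
    rw [integral_eq_measureReal_of_forall_eq_zero_or_eq_one (hmeas i) (hval i), measureReal_def,
      hbern i, ENNReal.toReal_ofReal (by linarith)]
  have hbound : ∀ i, ∀ᵐ ω ∂μ, X i ω ∈ Set.Icc 0 1 := fun i ↦ ae_of_all _ fun ω ↦ by
    rcases hval i ω with h | h <;> simp [h]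
  have hHoeffding := measureReal_sum_le_sub_le_of_mem_Icc_zero_one hindep
    (fun i ↦ (hmeas i).aemeasurable) hbound (t := p - 1 / 2) (by linarith)
  simp only [hmean, Finset.sum_const, Finset.card_univ, Fintype.card_fin, nsmul_eq_mul,
    show (ni : ℝ) * p - ni * (p - 1 / 2) = ni / 2 by ring] at hHoeffding
  refine hHoeffding.trans (Real.exp_le_exp.mpr ?_)
  rw [hp, mul_div_assoc, div_mul_eq_div_div_swap]
  linear_combination (1 / 2 : ℝ) * mul_le_mul_of_nonneg_left hsnr (Nat.cast_nonneg ni)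

/-- Local majority-vote error bound: a node computing the majority of `ni` independent
sign estimates, each correct with probability `p = 1 - q` where `q` satisfies the
SNR-dependent bound (`q ≤ 2/(9S²)` if `S > 2/√3`, else `q ≤ 1/2 - S/(2√3)`), errs
with probability at most `exp(- ni · S²/(2(S²+4)))`. -/
theorem local_majority_error
    {Ω : Type*} [MeasurableSpace Ω] (μ : Measure Ω) [IsProbabilityMeasure μ]
    (ni : ℕ) (S q p : ℝ) (hS : 0 < S)
    (hq1 : 2 / Real.sqrt 3 < S → q ≤ 2 / (9 * S ^ 2))
    (hq2 : S ≤ 2 / Real.sqrt 3 → q ≤ 1 / 2 - S / (2 * Real.sqrt 3))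
    (hq0 : 0 ≤ q)
    (hp : p = 1 - q)
    (X : Fin ni → Ω → ℝ)
    (hmeas : ∀ i, Measurable (X i))
    (hindep : iIndepFun X μ)
    (hval : ∀ i ω, X i ω = 0 ∨ X i ω = 1)
    (hbern : ∀ i, μ {ω | X i ω = 1} = ENNReal.ofReal p) :
    (μ {ω | (∑ i, X i ω) ≤ (ni : ℝ) / 2}).toReal ≤
      Real.exp (-((ni : ℝ) * S ^ 2 / (2 * (S ^ 2 + 4)))) :=
  local_majority_error_general μ ni S q p hS hq1 hq2 hp X hmeas hindep hval hbern
end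

section
/- Let m = n - b correct nodes each independently send the correct sign with probability u ≥ u* > 1/(2(1-α)) where b = nα, and let all b Byzantine nodes send the wrong sign. If u* - 1/(2(1-α)) ≥ √(log(Δ)/(2n(1-α))) for some Δ > 2, then the probability that at most n/2 nodes in total send the correct sign is less than 1/Δ. -/
/-!
The number of correct signs is a sum of `m = n (1 - α)` independent Bernoulli(`u`) variables,
and the threshold is `n / 2 = m (u - δ)` with `δ = u - 1 / (2 (1 - α)) ≥ u* - 1 / (2 (1 - α))`.
The Chernoff bound at parameter `-4δ`, with Hoeffding's lemma for the Bernoulli moment generating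
function, gives probability below `exp (-2 m δ²) ≤ 1 / Δ`. The inequality is strict because
Hoeffding's lemma is strict for a Bernoulli variable: `(1 - u + u e^{-x}) e^{u x - x² / 8}`
strictly decreases on `[0, ∞)`, which comes down to `tanh (x / 4) < x / 4`.
-/

open MeasureTheory ProbabilityTheory Real

lemma one_sub_exp_neg_lt {r : ℝ} (hr : 0 < r) : 1 - exp (-r) < r / 2 * (1 + exp (-r)) := by
  let f : ℝ → ℝ := fun x => x / 2 * (1 + exp (-x)) - (1 - exp (-x))
  have hf : ∀ x, HasDerivAt f ((1 - (1 + x) * exp (-x)) / 2) x := by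
    intro x
    have he : HasDerivAt (fun x => exp (-x)) (-exp (-x)) x := by
      simpa using (hasDerivAt_neg x).exp
    exact ((((hasDerivAt_id' x).div_const 2).mul (he.const_add 1)).sub
      (he.const_sub 1)).congr_deriv (by ring)
  have hmono : StrictMonoOn f (Set.Ici 0) := by
    refine strictMonoOn_of_deriv_pos (convex_Ici 0) ?_ fun x hx => ?_
    · exact HasDerivAt.continuousOn fun x _ => hf x
    · rw [interior_Ici] at hx
      have h1 : (1 + x) * exp (-x) < 1 := by
        rw [exp_neg, ← div_eq_mul_inv, div_lt_one (exp_pos x), add_comm]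
        exact add_one_lt_exp (ne_of_gt hx)
      rw [(hf x).deriv]
      linarith
  have := hmono Set.self_mem_Ici hr.le hr
  simp only [f, neg_zero, exp_zero] at this
  linarith

lemma mul_one_sub_mul_one_sub_exp_neg_lt {u x : ℝ} (hu1 : u ≤ 1) (hx : 0 < x) :
    u * (1 - u) * (1 - exp (-x)) < x / 4 * (1 - u + u * exp (-x)) := by
  set y := exp (-(x / 2))
  have hy : 0 < y := exp_pos _
  have hy1 : y < 1 := exp_lt_one_iff.mpr (by linarith)
  have hsq : exp (-x) = y ^ 2 := by rw [← exp_nat_mul]; ring_nf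
  have htanh : 1 - y < x / 4 * (1 + y) := by
    have := one_sub_exp_neg_lt (half_pos hx)
    linarith
  -- The slack in this inequality is exactly `(1 - u - u y)²`.
  have hamgm : u * (1 - u) * (1 + y) ^ 2 ≤ 1 - u + u * y ^ 2 := by
    nlinarith [sq_nonneg (1 - u - u * y)]
  have hD : 0 < 1 - u + u * y ^ 2 := by
    have hy2 : y ^ 2 ≤ 1 := pow_le_one₀ hy.le hy1.le
    nlinarith [mul_nonneg (sub_nonneg.mpr hu1) (sub_nonneg.mpr hy2)]
  rw [hsq]
  nlinarith [mul_le_mul_of_nonneg_right hamgm (by linarith : 0 ≤ 1 - y),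
    mul_lt_mul_of_pos_left htanh hD]

/-- Strict form of Hoeffding's lemma for a Bernoulli variable, lower tail. -/
lemma one_sub_add_mul_exp_neg_lt {u s : ℝ} (hu1 : u ≤ 1) (hs : 0 < s) :
    1 - u + u * exp (-s) < exp (-(u * s) + s ^ 2 / 8) := by
  let h : ℝ → ℝ := fun x => (1 - u + u * exp (-x)) * exp (u * x - x ^ 2 / 8)
  have hh : ∀ x, HasDerivAt h ((u * (1 - u) * (1 - exp (-x)) - x / 4 * (1 - u + u * exp (-x)))
      * exp (u * x - x ^ 2 / 8)) x := by
    intro x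
    have he : HasDerivAt (fun x => exp (-x)) (-exp (-x)) x := by
      simpa using (hasDerivAt_neg x).exp
    have hq : HasDerivAt (fun x => u * x - x ^ 2 / 8) (u - x / 4) x :=
      (((hasDerivAt_id' x).const_mul u).sub ((hasDerivAt_pow 2 x).div_const 8)).congr_deriv
        (by push_cast; ring)
    exact (((he.const_mul u).const_add (1 - u)).mul hq.exp).congr_deriv (by ring)
  have hanti : StrictAntiOn h (Set.Ici 0) := by
    refine strictAntiOn_of_deriv_neg (convex_Ici 0) ?_ fun x hx => ?_
    · exact HasDerivAt.continuousOn fun x _ => hh x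
    · rw [interior_Ici] at hx
      rw [(hh x).deriv]
      exact mul_neg_of_neg_of_pos
        (sub_neg.mpr (mul_one_sub_mul_one_sub_exp_neg_lt hu1 hx)) (exp_pos _)
  have := hanti Set.self_mem_Ici hs.le hs
  simp only [h, neg_zero, exp_zero, mul_zero, mul_one, zero_pow two_ne_zero, zero_div,
    sub_zero, sub_add_cancel] at this
  rw [← lt_div_iff₀ (exp_pos _), one_div, ← exp_neg] at this
  exact this.trans_eq (by congr 1; ring)

section SumOfIndicators

variable {Ω : Type*} [MeasurableSpace Ω] {μ : Measure Ω} [IsProbabilityMeasure μ]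

lemma mgf_of_forall_eq_zero_or_eq_one {X : Ω → ℝ} (hX : Measurable X)
    (hval : ∀ ω, X ω = 0 ∨ X ω = 1) (t : ℝ) :
    mgf X μ t = 1 - μ.real {ω | X ω = 1} + μ.real {ω | X ω = 1} * exp t := by
  have hA : MeasurableSet {ω | X ω = 1} := hX (measurableSet_singleton 1)
  have hexp : (fun ω => exp (t * X ω))
      = fun ω => 1 + {ω | X ω = 1}.indicator (fun _ => exp t - 1) ω := by
    funext ω
    rcases hval ω with h | h <;> simp [h]
  rw [mgf, hexp, integral_add (integrable_const 1) ((integrable_const _).indicator hA),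
    integral_const, integral_indicator_const _ hA]
  simp only [probReal_univ, smul_eq_mul]
  ring

theorem measure_sum_le_lt_exp_of_forall_eq_zero_or_eq_one {ι : Type*} [Fintype ι]
    [Nonempty ι] {X : ι → Ω → ℝ} {u δ : ℝ} (hindep : iIndepFun X μ) (hmeas : ∀ i, Measurable (X i))
    (hval : ∀ i ω, X i ω = 0 ∨ X i ω = 1) (hbern : ∀ i, μ.real {ω | X i ω = 1} = u)
    (hδ : 0 < δ) :
    μ.real {ω | ∑ i, X i ω ≤ Fintype.card ι * (u - δ)} < exp (-2 * Fintype.card ι * δ ^ 2) := by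
  obtain ⟨i₀⟩ := ‹Nonempty ι›
  have hu0 : 0 ≤ u := hbern i₀ ▸ measureReal_nonneg
  have hu1 : u ≤ 1 := hbern i₀ ▸ measureReal_le_one
  have hint : Integrable (fun ω => exp (-(4 * δ) * (∑ i, X i) ω)) μ :=
    hindep.integrable_exp_mul_sum hmeas fun i _ =>
      integrable_exp_mul_of_mem_Icc (a := 0) (b := 1) (hmeas i).aemeasurable
        (ae_of_all _ fun ω => by rcases hval i ω with h | h <;> simp [h])
  have hmgf : mgf (∑ i, X i) μ (-(4 * δ)) = (1 - u + u * exp (-(4 * δ))) ^ Fintype.card ι := by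
    simp [hindep.mgf_sum hmeas, mgf_of_forall_eq_zero_or_eq_one (hmeas _) (hval _), hbern]
  calc μ.real {ω | ∑ i, X i ω ≤ Fintype.card ι * (u - δ)}
      = μ.real {ω | (∑ i, X i) ω ≤ Fintype.card ι * (u - δ)} := by simp only [Finset.sum_apply]
    _ ≤ exp (-(-(4 * δ)) * (Fintype.card ι * (u - δ))) * mgf (∑ i, X i) μ (-(4 * δ)) :=
        measure_le_le_exp_mul_mgf _ (by linarith) hint
    _ < exp (4 * δ * (Fintype.card ι * (u - δ)))
          * exp (-(u * (4 * δ)) + (4 * δ) ^ 2 / 8) ^ Fintype.card ι := by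
        rw [hmgf, neg_neg]
        gcongr
        exact one_sub_add_mul_exp_neg_lt hu1 (by linarith)
    _ = exp (-2 * Fintype.card ι * δ ^ 2) := by
        rw [← exp_nat_mul, ← exp_add]
        ring_nf

end SumOfIndicators

theorem global_majority_error_general
    {Ω : Type*} [MeasurableSpace Ω] (μ : Measure Ω) [IsProbabilityMeasure μ]
    (n b : ℕ) (α u ustar Δ : ℝ)
    (hn : 0 < n) (hb : b ≤ n) (hα1 : α < 1)
    (hbα : (b : ℝ) = n * α)
    (huu : ustar ≤ u)
    (hustar : 1 / (2 * (1 - α)) < ustar)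
    (hΔ : 2 < Δ)
    (hgap : Real.sqrt (Real.log Δ / (2 * n * (1 - α))) ≤ ustar - 1 / (2 * (1 - α)))
    (X : Fin (n - b) → Ω → ℝ)
    (hmeas : ∀ i, Measurable (X i))
    (hindep : iIndepFun X μ)
    (hval : ∀ i ω, X i ω = 0 ∨ X i ω = 1)
    (hbern : ∀ i, μ {ω | X i ω = 1} = ENNReal.ofReal u) :
    (μ {ω | (∑ i, X i ω) ≤ (n : ℝ) / 2}).toReal < 1 / Δ := by
  set c := 1 / (2 * (1 - α)) with hc_def
  have hc : 0 < c := one_div_pos.mpr (by linarith)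
  have hm : ((n - b : ℕ) : ℝ) = n * (1 - α) := by rw [Nat.cast_sub hb, hbα]; ring
  have hm_pos : (0 : ℝ) < (n - b : ℕ) := by
    rw [hm]; exact mul_pos (by exact_mod_cast hn) (by linarith)
  have : Nonempty (Fin (n - b)) := ⟨⟨0, by exact_mod_cast hm_pos⟩⟩
  have hthreshold : (n : ℝ) / 2 = (n - b : ℕ) * (u - (u - c)) := by
    rw [sub_sub_cancel, hm, hc_def]
    field_simp [(by linarith : (1 : ℝ) - α ≠ 0)]
  have hlog : log Δ ≤ 2 * (n - b : ℕ) * (ustar - c) ^ 2 := by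
    have := (sqrt_le_iff.mp hgap).2
    rw [div_le_iff₀ (by rw [mul_assoc, ← hm]; positivity)] at this
    linear_combination this - (ustar - c) ^ 2 * 2 * hm
  have hbound := measure_sum_le_lt_exp_of_forall_eq_zero_or_eq_one hindep hmeas hval
    (fun i => by rw [measureReal_def, hbern i, ENNReal.toReal_ofReal (by linarith)])
    (show 0 < u - c by linarith)
  simp only [Fintype.card_fin, ← hthreshold] at hbound
  calc (μ {ω | (∑ i, X i ω) ≤ (n : ℝ) / 2}).toReal
      < exp (-2 * (n - b : ℕ) * (u - c) ^ 2) := hbound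
    _ ≤ exp (-log Δ) := by
        have hsq : (ustar - c) ^ 2 ≤ (u - c) ^ 2 := by gcongr
        gcongr
        nlinarith [mul_le_mul_of_nonneg_left hsq hm_pos.le]
    _ = 1 / Δ := by rw [exp_neg, exp_log (by linarith), one_div]

/-- Global estimation error at the master: with `b = nα` Byzantine nodes sending the
wrong sign and `m = n - b` intact nodes each independently sending the correct sign
with probability `u ≥ u* > 1/(2(1-α))`, if `u* - 1/(2(1-α)) ≥ √(log Δ/(2n(1-α)))`
for some `Δ > 2`, then the probability that at most `n/2` nodes in total send the
correct sign is less than `1/Δ`. -/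
theorem global_majority_error
    {Ω : Type*} [MeasurableSpace Ω] (μ : Measure Ω) [IsProbabilityMeasure μ]
    (n b : ℕ) (α u ustar Δ : ℝ)
    (hn : 0 < n) (hb : b ≤ n) (hα0 : 0 ≤ α) (hα1 : α < 1)
    (hbα : (b : ℝ) = n * α)
    (hu1 : u ≤ 1) (huu : ustar ≤ u)
    (hustar : 1 / (2 * (1 - α)) < ustar)
    (hΔ : 2 < Δ)
    (hgap : Real.sqrt (Real.log Δ / (2 * n * (1 - α))) ≤ ustar - 1 / (2 * (1 - α)))
    (X : Fin (n - b) → Ω → ℝ)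
    (hmeas : ∀ i, Measurable (X i))
    (hindep : iIndepFun X μ)
    (hval : ∀ i ω, X i ω = 0 ∨ X i ω = 1)
    (hbern : ∀ i, μ {ω | X i ω = 1} = ENNReal.ofReal u) :
    (μ {ω | (∑ i, X i ω) ≤ (n : ℝ) / 2}).toReal < 1 / Δ :=
  global_majority_error_general μ n b α u ustar Δ hn hb hα1 hbα huu hustar hΔ hgap X hmeas hindep
    hval hbern
end

section
/- Let f be L-coordinate-smooth with lower bound f*, and at step t let w_{t+1} = w_t - γ μ̂_t with μ̂_t ∈ {-1,+1}^d. Then E[f(w_{t+1}) - f(w_t)] ≤ -γ‖g(w_t)‖₁ + 2γ Σ_k |g_k(w_t)| · P[μ̂_{t,k} ≠ sign(g_k(w_t))] + (γ²/2)‖L‖₁. -/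
/-!
Coordinate smoothness at `w` with `y - w = -γ μ̂` and `μ̂_k² = 1` bounds `f(w') - f(w)` by
`-γ Σ_k g_k μ̂_k + (γ²/2) Σ_k L_k`. A sign `μ̂_k` either agrees with `sign g_k`, and then
`g_k μ̂_k = |g_k|`, or it does not, and then `g_k μ̂_k = -|g_k|`; hence
`g_k μ̂_k = |g_k| - 2 |g_k| 1[μ̂_k ≠ sign g_k]`, and taking expectations turns the indicators
into the probabilities of a wrong sign.
-/

open MeasureTheory Finset

theorem mul_eq_abs_sub_ite (c : ℝ) {s : ℝ} (hs : s = 1 ∨ s = -1) :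
    c * s = |c| - 2 * if s ≠ Real.sign c then |c| else 0 := by
  rcases lt_trichotomy c 0 with hc | rfl | hc
  · rcases hs with rfl | rfl <;> norm_num [Real.sign_of_neg hc, abs_of_neg hc]; ring
  · simp
  · rcases hs with rfl | rfl <;> norm_num [Real.sign_of_pos hc, abs_of_pos hc]; ring

theorem sub_le_of_coord_smooth_of_sign {ι : Type*} [Fintype ι] {f : (ι → ℝ) → ℝ} {g L : ι → ℝ}
    {w : ι → ℝ}
    (hsmooth : ∀ y, |f y - (f w + ∑ k, g k * (y k - w k))| ≤ 1 / 2 * ∑ k, L k * (y k - w k) ^ 2)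
    (γ : ℝ) {s : ι → ℝ} (hs : ∀ k, s k = 1 ∨ s k = -1) :
    f (w - γ • s) - f w ≤ -γ * ∑ k, g k * s k + γ ^ 2 / 2 * ∑ k, L k := by
  have hlin : ∑ k, g k * ((w - γ • s) k - w k) = -γ * ∑ k, g k * s k := by
    rw [mul_sum]
    refine sum_congr rfl fun k _ => ?_
    simp only [Pi.sub_apply, Pi.smul_apply, smul_eq_mul]
    ring
  have hquad : 1 / 2 * ∑ k, L k * ((w - γ • s) k - w k) ^ 2 = γ ^ 2 / 2 * ∑ k, L k := by
    rw [mul_sum, mul_sum]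
    refine sum_congr rfl fun k _ => ?_
    rcases hs k with h | h <;> simp only [Pi.sub_apply, Pi.smul_apply, smul_eq_mul, h] <;> ring
  linarith [(abs_le.mp (hsmooth (w - γ • s))).2]

theorem integral_sum_indicator_const {Ω ι : Type*} [MeasurableSpace Ω] [Fintype ι] {μ : Measure Ω}
    [IsFiniteMeasure μ] {S : ι → Set Ω} (hS : ∀ k, MeasurableSet (S k)) (c : ι → ℝ) :
    ∫ ω, ∑ k, (S k).indicator (fun _ => c k) ω ∂μ = ∑ k, c k * μ.real (S k) := by
  rw [integral_finsetSum _ fun k _ => (integrable_const _).indicator (hS k)]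
  simp [integral_indicator_const _ (hS _), mul_comm]

theorem signsgd_descent_step_general
    {Ω : Type*} [MeasurableSpace Ω] (μ : Measure Ω) [IsProbabilityMeasure μ]
    (d : ℕ) (f : (Fin d → ℝ) → ℝ) (g : (Fin d → ℝ) → (Fin d → ℝ)) (L : Fin d → ℝ)
    (hsmooth : ∀ x y : Fin d → ℝ,
      |f y - (f x + ∑ k, g x k * (y k - x k))| ≤ (1 / 2) * ∑ k, L k * (y k - x k) ^ 2)
    (γ : ℝ) (w : Fin d → ℝ) (μhat : Ω → Fin d → ℝ)
    (hmeas : Measurable μhat)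
    (hsign : ∀ ω k, μhat ω k = 1 ∨ μhat ω k = -1)
    (hint : Integrable (fun ω => f (w - γ • μhat ω)) μ) :
    ∫ ω, (f (w - γ • μhat ω) - f w) ∂μ ≤
      -γ * (∑ k, |g w k|) +
        2 * γ * (∑ k, |g w k| * (μ {ω | μhat ω k ≠ Real.sign (g w k)}).toReal) +
        γ ^ 2 / 2 * (∑ k, L k) := by
  set S : Fin d → Set Ω := fun k => {ω | μhat ω k ≠ Real.sign (g w k)}
  have hS : ∀ k, MeasurableSet (S k) := fun k =>
    ((measurable_pi_apply k).comp hmeas (measurableSet_singleton _)).compl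
  set mismatch : Ω → ℝ := fun ω => ∑ k, (S k).indicator (fun _ => |g w k|) ω
  have hmismatch : Integrable mismatch μ :=
    integrable_finsetSum _ fun k _ => (integrable_const _).indicator (hS k)
  have hstep : ∀ ω, f (w - γ • μhat ω) - f w ≤
      (-γ * ∑ k, |g w k| + γ ^ 2 / 2 * ∑ k, L k) + 2 * γ * mismatch ω := by
    intro ω
    have hlin : ∑ k, g w k * μhat ω k = ∑ k, |g w k| - 2 * mismatch ω := by
      simp only [mismatch, S, mul_sum, ← sum_sub_distrib, Set.indicator_apply, Set.mem_ofPred_eq]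
      exact sum_congr rfl fun k _ => mul_eq_abs_sub_ite _ (hsign ω k)
    have hdescent := sub_le_of_coord_smooth_of_sign (hsmooth w) γ (hsign ω)
    rw [hlin] at hdescent
    linarith
  calc ∫ ω, (f (w - γ • μhat ω) - f w) ∂μ
      ≤ ∫ ω, ((-γ * ∑ k, |g w k| + γ ^ 2 / 2 * ∑ k, L k) + 2 * γ * mismatch ω) ∂μ :=
        integral_mono (hint.sub (integrable_const _)) ((integrable_const _).add
          (hmismatch.const_mul _)) hstep
    _ = _ := by
      rw [integral_add (integrable_const _) (hmismatch.const_mul _), integral_const, probReal_univ,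
        one_smul, integral_const_mul, integral_sum_indicator_const hS]
      simp only [measureReal_def, S]
      ring

/-- Per-step descent inequality for SignSGD-type updates: if `f` is coordinate-wise
smooth with constants `L` and gradient `g`, and `w' = w - γ μ̂` with `μ̂ ∈ {±1}^d` a
random sign vector, then `E[f(w') - f(w)] ≤ -γ‖g(w)‖₁ +
2γ Σ_k |g_k(w)| P[μ̂_k ≠ sign(g_k(w))] + (γ²/2)‖L‖₁`. -/
theorem signsgd_descent_step
    {Ω : Type*} [MeasurableSpace Ω] (μ : Measure Ω) [IsProbabilityMeasure μ]
    (d : ℕ) (f : (Fin d → ℝ) → ℝ) (g : (Fin d → ℝ) → (Fin d → ℝ)) (L : Fin d → ℝ)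
    (hL : ∀ k, 0 ≤ L k)
    (hgrad : ∀ x, HasFDerivAt f (∑ k, g x k • (ContinuousLinearMap.proj k : (Fin d → ℝ) →L[ℝ] ℝ)) x)
    (hsmooth : ∀ x y : Fin d → ℝ,
      |f y - (f x + ∑ k, g x k * (y k - x k))| ≤ (1 / 2) * ∑ k, L k * (y k - x k) ^ 2)
    (γ : ℝ) (w : Fin d → ℝ) (μhat : Ω → Fin d → ℝ)
    (hmeas : Measurable μhat)
    (hsign : ∀ ω k, μhat ω k = 1 ∨ μhat ω k = -1)
    (hint : Integrable (fun ω => f (w - γ • μhat ω)) μ) :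
    ∫ ω, (f (w - γ • μhat ω) - f w) ∂μ ≤
      -γ * (∑ k, |g w k|) +
        2 * γ * (∑ k, |g w k| * (μ {ω | μhat ω k ≠ Real.sign (g w k)}).toReal) +
        γ ^ 2 / 2 * (∑ k, L k) :=
  signsgd_descent_step_general μ d f g L hsmooth γ w μhat hmeas hsign hint
end

section
/- Let n be odd, 0 < b < (n-1)/2, s = (n-1)/2 - b, L = ⌊(n - (2b+1))/(2(b+1))⌋ + 1. Construct G ∈ {0,1}^{n×n} by: G(1:s,1:s) = I_s (rest of rows 1..s zero); for l = 1..L, row s+l has ones exactly in columns s + (l-1)(b+1) + 1 through s + (l-1)(b+1) + 2b + 1 (2b+1 ones, shifted by b+1 per row); rows s+L+1 through n are all-ones. Then for every m ∈ {0,1}^n with weight (n-1)/2: |S_1(m)| + |S_{b+1}(m)| ≤ s, where S_1(m) = {i ≤ s : m_i = 1} and S_{b+1}(m) = {s < i ≤ s+L : mᵀG(i,:) ≥ b+1}. -/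
/-!
Cut the positions from `c` on into blocks `[c + l(b+1), c + l(b+1) + b]` of length `b + 1`;
the window of row `l` is block `l` followed by the first `b` positions of block `l + 1`, so a
window holding at least `b + 1` ones has a one in its own block. If `M` is the last heavy
window, the heavy windows before it therefore contribute one one each in pairwise different
blocks, all in front of window `M`, which holds another `b + 1`. Hence `k ≥ 1` heavy windows
need at least `b + k` ones from position `c = s` on; since a message has `s + b` ones, at most
`s - k` of them lie in the first `s` positions.
-/

open Finset

namespace Algorithm1

variable {n : ℕ}

lemma card_filter_le_of_val_mem (p : Fin n → Prop) [DecidablePred p] (t : Finset ℕ)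
    (h : ∀ j, p j → (j : ℕ) ∈ t) : #(univ.filter p) ≤ #t :=
  card_le_card_of_injOn Fin.val (fun j hj => h j (mem_filter.mp hj).2)
    (fun _ _ _ _ => Fin.ext)

variable (m : Fin n → Bool) (b c : ℕ)

lemma exists_one_in_block_of_heavy_window (l : ℕ)
    (heavy : b + 1 ≤ #(univ.filter fun j : Fin n =>
      c + l * (b + 1) ≤ (j : ℕ) ∧ (j : ℕ) ≤ c + l * (b + 1) + 2 * b ∧ m j = true)) :
    ∃ j : Fin n, c + l * (b + 1) ≤ (j : ℕ) ∧ (j : ℕ) ≤ c + l * (b + 1) + b ∧ m j = true := by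
  by_contra! hblock
  have : #(univ.filter fun j : Fin n =>
      c + l * (b + 1) ≤ (j : ℕ) ∧ (j : ℕ) ≤ c + l * (b + 1) + 2 * b ∧ m j = true) ≤
      #(Icc (c + l * (b + 1) + b + 1) (c + l * (b + 1) + 2 * b)) :=
    card_filter_le_of_val_mem _ _ fun j ⟨hlo, hhi, hj⟩ =>
      mem_Icc.mpr ⟨Nat.lt_of_not_le fun h => hblock j hlo h hj, hhi⟩
  simp only [Nat.card_Icc] at this
  omega

lemma add_card_le_of_heavy_windows (T : Finset ℕ) (hT : T.Nonempty)
    (heavy : ∀ l ∈ T, b + 1 ≤ #(univ.filter fun j : Fin n =>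
      c + l * (b + 1) ≤ (j : ℕ) ∧ (j : ℕ) ≤ c + l * (b + 1) + 2 * b ∧ m j = true)) :
    b + #T ≤ #(univ.filter fun j : Fin n => c ≤ (j : ℕ) ∧ m j = true) := by
  set M := T.max' hT
  set before := univ.filter fun j : Fin n =>
    c ≤ (j : ℕ) ∧ (j : ℕ) < c + M * (b + 1) ∧ m j = true
  set last := univ.filter fun j : Fin n =>
    c + M * (b + 1) ≤ (j : ℕ) ∧ (j : ℕ) ≤ c + M * (b + 1) + 2 * b ∧ m j = true
  have h_before : #(T.erase M) ≤ #before := by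
    refine card_le_card_of_surjOn (fun j : Fin n => ((j : ℕ) - c) / (b + 1)) ?_
    intro l hl
    obtain ⟨hlM, hlT⟩ := mem_erase.mp hl
    have hlt : l + 1 ≤ M := T.lt_max'_of_mem_erase_max' hT (mem_erase.mpr ⟨hlM, hlT⟩)
    obtain ⟨j, hlo, hhi, hj⟩ := exists_one_in_block_of_heavy_window m b c l (heavy l hlT)
    have hM : (l + 1) * (b + 1) ≤ M * (b + 1) := Nat.mul_le_mul_right _ hlt
    refine ⟨j, mem_filter.mpr ⟨mem_univ _, by omega, by linarith, hj⟩, ?_⟩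
    exact Nat.div_eq_of_lt_le (by omega) (by rw [add_mul]; omega)
  have h_disjoint : Disjoint before last := by
    rw [disjoint_left]
    intro j hj hj'
    simp only [before, last, mem_filter] at hj hj'
    omega
  have h_subset : before ∪ last ⊆ univ.filter fun j : Fin n => c ≤ (j : ℕ) ∧ m j = true := by
    intro j hj
    simp only [before, last, mem_union, mem_filter, mem_univ, true_and] at hj ⊢
    rcases hj with ⟨h, -, hj⟩ | ⟨h, -, hj⟩
    · exact ⟨h, hj⟩
    · exact ⟨le_trans (Nat.le_add_right _ _) h, hj⟩
  have h_last : b + 1 ≤ #last := heavy M (T.max'_mem hT)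
  have h_erase : #(T.erase M) + 1 = #T := card_erase_add_one (T.max'_mem hT)
  have := card_le_card h_subset
  rw [card_union_of_disjoint h_disjoint] at this
  omega

end Algorithm1

open Algorithm1 in
theorem algorithm1_tolerance_condition_general (n b s L : ℕ)
    (hb : b < (n - 1) / 2)
    (hs : s = (n - 1) / 2 - b) :
    ∀ m : Fin n → Bool,
      (Finset.univ.filter fun i => m i = true).card = (n - 1) / 2 →
      (Finset.univ.filter fun i : Fin n => (i : ℕ) < s ∧ m i = true).card +
        (Finset.univ.filter fun i : Fin n =>
            s ≤ (i : ℕ) ∧ (i : ℕ) < s + L ∧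
            b + 1 ≤ (Finset.univ.filter fun j : Fin n =>
              s + ((i : ℕ) - s) * (b + 1) ≤ (j : ℕ) ∧
              (j : ℕ) ≤ s + ((i : ℕ) - s) * (b + 1) + 2 * b ∧
              m j = true).card).card
        ≤ s := by
  intro m hm
  set rows := univ.filter fun i : Fin n =>
    s ≤ (i : ℕ) ∧ (i : ℕ) < s + L ∧
    b + 1 ≤ #(univ.filter fun j : Fin n =>
      s + ((i : ℕ) - s) * (b + 1) ≤ (j : ℕ) ∧
      (j : ℕ) ≤ s + ((i : ℕ) - s) * (b + 1) + 2 * b ∧ m j = true)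
  have h_split : #(univ.filter fun i : Fin n => (i : ℕ) < s ∧ m i = true) +
      #(univ.filter fun i : Fin n => s ≤ (i : ℕ) ∧ m i = true) = s + b := by
    rw [← card_union_of_disjoint (disjoint_filter.mpr fun _ _ h h' => by omega), ← filter_or]
    convert hm using 3 with i
    · grind
    · omega
  have h_front : #(univ.filter fun i : Fin n => (i : ℕ) < s ∧ m i = true) ≤ s := by
    simpa using card_filter_le_of_val_mem _ (range s) fun i hi => mem_range.mpr hi.1
  have h_rows : #rows = #(rows.image fun i : Fin n => (i : ℕ) - s) :=
    (card_image_of_injOn fun i hi i' hi' h =>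
      Fin.ext (by have := (mem_filter.mp hi).2.1; have := (mem_filter.mp hi').2.1; omega)).symm
  obtain hT | hT := (rows.image fun i : Fin n => (i : ℕ) - s).eq_empty_or_nonempty
  · rw [h_rows, hT, card_empty]
    omega
  · have h_back := add_card_le_of_heavy_windows m b s _ hT fun l hl => by
      obtain ⟨i, hi, rfl⟩ := mem_image.mp hl
      exact (mem_filter.mp hi).2.2.2
    omega

/-- Core combinatorial property of the deterministic code of Algorithm 1: with `n`
odd, `0 < b < (n-1)/2`, `s = (n-1)/2 - b` and `L = ⌊(n-(2b+1))/(2(b+1))⌋ + 1`, for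
every message `m ∈ {0,1}ⁿ` of weight `(n-1)/2`,
`|S₁(m)| + |S_{b+1}(m)| ≤ s`, where `S₁(m) = {i ≤ s : mᵢ = 1}` (the weight-1 identity
rows) and `S_{b+1}(m) = {s < i ≤ s+L : mᵀG(i,:) ≥ b+1}` (the weight-`2b+1` middle
rows, row `s+l` covering the `2b+1` columns starting at `s + (l-1)(b+1) + 1`). -/
theorem algorithm1_tolerance_condition (n b s L : ℕ) (hn : Odd n)
    (hb0 : 0 < b) (hb : b < (n - 1) / 2)
    (hs : s = (n - 1) / 2 - b)
    (hL : L = (n - (2 * b + 1)) / (2 * (b + 1)) + 1) :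
    ∀ m : Fin n → Bool,
      (Finset.univ.filter fun i => m i = true).card = (n - 1) / 2 →
      (Finset.univ.filter fun i : Fin n => (i : ℕ) < s ∧ m i = true).card +
        (Finset.univ.filter fun i : Fin n =>
            s ≤ (i : ℕ) ∧ (i : ℕ) < s + L ∧
            b + 1 ≤ (Finset.univ.filter fun j : Fin n =>
              s + ((i : ℕ) - s) * (b + 1) ≤ (j : ℕ) ∧
              (j : ℕ) ≤ s + ((i : ℕ) - s) * (b + 1) + 2 * b ∧
              m j = true).card).card
        ≤ s :=
  algorithm1_tolerance_condition_general n b s L hb hs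
end

section
/- Under the construction of Algorithm 1 with n odd and 0 < b < (n-1)/2, the computational redundancy r = (sum of all entries of G)/n equals (n + (2b+1))/2 - (⌊(n-(2b+1))/(2(b+1))⌋ + 1/2)·(n-(2b+1))/n. -/
/-! Row `i` of `G` has one entry below `s`, then `2b+1` entries (the window starting at
`s + (i - s)(b+1)` fits into `Fin n` because `⌊(n-(2b+1))/(2(b+1))⌋ (b+1) ≤ s`), and `n` entries
afterwards. As `n = 2s + 2b + 1`, the total `s + L(2b+1) + (n - s - L)n`, divided by `n`,
is the closed form. -/

open Finset

def allocationMatrix (n b s L : ℕ) : Fin n → Fin n → Bool := fun i j =>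
  if (i : ℕ) < s then decide ((j : ℕ) = (i : ℕ))
  else if (i : ℕ) < s + L then
    decide (s + ((i : ℕ) - s) * (b + 1) ≤ (j : ℕ) ∧ (j : ℕ) ≤ s + ((i : ℕ) - s) * (b + 1) + 2 * b)
  else true

theorem Fin.sum_boole_le_and_le {R : Type*} [AddCommMonoidWithOne R] {n a k : ℕ}
    (h : a + k < n) :
    ∑ j : Fin n, (if a ≤ (j : ℕ) ∧ (j : ℕ) ≤ a + k then (1 : R) else 0) = ((k + 1 : ℕ) : R) := by
  rw [Fin.sum_univ_eq_sum_range (fun j => if a ≤ j ∧ j ≤ a + k then (1 : R) else 0), sum_boole]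
  have : (range n).filter (fun j => a ≤ j ∧ j ≤ a + k) = Icc a (a + k) := by
    ext j; simp only [mem_filter, mem_range, mem_Icc]; omega
  rw [this, Nat.card_Icc]; congr 1; omega

theorem Fin.sum_ite_lt_ite_lt {M : Type*} [AddCommMonoid M] {n s L : ℕ} (h : s + L ≤ n)
    (x y z : M) :
    ∑ i : Fin n, (if (i : ℕ) < s then x else if (i : ℕ) < s + L then y else z) =
      s • x + L • y + (n - (s + L)) • z := by
  obtain ⟨t, rfl⟩ := Nat.exists_eq_add_of_le h
  rw [Fin.sum_univ_eq_sum_range (fun i => if i < s then x else if i < s + L then y else z),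
    sum_range_add, sum_range_add, Nat.add_sub_cancel_left]
  have first : ∑ i ∈ range s, (if i < s then x else if i < s + L then y else z) = s • x := by
    rw [sum_congr rfl fun i hi => if_pos (mem_range.mp hi), Finset.sum_const, card_range]
  have middle : ∑ i ∈ range L, (if s + i < s then x else if s + i < s + L then y else z) =
      L • y := by
    rw [sum_congr rfl fun i hi => by rw [if_neg (by omega), if_pos (by simpa using hi)],
      Finset.sum_const, card_range]
  have last : ∑ i ∈ range t, (if s + L + i < s then x else if s + L + i < s + L then y else z) =
      t • z := by
    rw [sum_congr rfl fun i _ => by rw [if_neg (by omega), if_neg (by omega)], Finset.sum_const,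
      card_range]
  rw [first, middle, last]

theorem allocationMatrix_rowSum {R : Type*} [AddCommMonoidWithOne R] {n b s L : ℕ}
    (hrow : s + (L - 1) * (b + 1) + 2 * b < n) (i : Fin n) :
    ∑ j, (if allocationMatrix n b s L i j then (1 : R) else 0) =
      if (i : ℕ) < s then 1 else if (i : ℕ) < s + L then ((2 * b + 1 : ℕ) : R) else n := by
  unfold allocationMatrix
  by_cases h₁ : (i : ℕ) < s
  · simp [h₁, Fin.val_inj]
  by_cases h₂ : (i : ℕ) < s + L
  · have : ((i : ℕ) - s) * (b + 1) ≤ (L - 1) * (b + 1) := Nat.mul_le_mul_right _ (by omega)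
    simpa only [h₁, h₂, if_false, if_true, decide_eq_true_eq] using
      Fin.sum_boole_le_and_le (R := R) (k := 2 * b) (by omega)
  · simp [h₁, h₂]

theorem sum_allocationMatrix {R : Type*} [AddCommMonoidWithOne R] {n b s L : ℕ}
    (hrow : s + (L - 1) * (b + 1) + 2 * b < n) (hsL : s + L ≤ n) :
    ∑ i, ∑ j, (if allocationMatrix n b s L i j then (1 : R) else 0) =
      s • 1 + L • ((2 * b + 1 : ℕ) : R) + (n - (s + L)) • (n : R) := by
  simp only [allocationMatrix_rowSum hrow, Fin.sum_ite_lt_ite_lt hsL]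

theorem algorithm1_redundancy_general (n b s L : ℕ) (hn : Odd n)
    (hb : b < (n - 1) / 2)
    (hs : s = (n - 1) / 2 - b)
    (hL : L = (n - (2 * b + 1)) / (2 * (b + 1)) + 1)
    (G : Fin n → Fin n → Bool)
    (hG : ∀ i j : Fin n, G i j =
      if (i : ℕ) < s then decide ((j : ℕ) = (i : ℕ))
      else if (i : ℕ) < s + L then
        decide (s + ((i : ℕ) - s) * (b + 1) ≤ (j : ℕ) ∧
          (j : ℕ) ≤ s + ((i : ℕ) - s) * (b + 1) + 2 * b)
      else true) :
    (∑ i : Fin n, ∑ j : Fin n, (if G i j = true then (1 : ℝ) else 0)) / n =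
      ((n : ℝ) + (2 * b + 1)) / 2 -
        ((((n - (2 * b + 1)) / (2 * (b + 1)) : ℕ) : ℝ) + 1 / 2) *
          ((n : ℝ) - (2 * b + 1)) / n := by
  obtain rfl : G = allocationMatrix n b s L := funext₂ hG
  have hn_eq : n = 2 * s + 2 * b + 1 := by obtain ⟨m, rfl⟩ := hn; omega
  set ℓ := (n - (2 * b + 1)) / (2 * (b + 1))
  have hℓ : ℓ * (b + 1) ≤ s := by
    have : ℓ * (2 * (b + 1)) ≤ 2 * s := by
      rw [show 2 * s = n - (2 * b + 1) by omega]; exact Nat.div_mul_le_self _ _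
    linarith [show ℓ * (2 * (b + 1)) = 2 * (ℓ * (b + 1)) by ring]
  have hrow : s + (L - 1) * (b + 1) + 2 * b < n := by rw [hL, Nat.add_sub_cancel]; omega
  have hsL : s + L ≤ n := by nlinarith
  have hnR : (n : ℝ) = 2 * s + 2 * b + 1 := mod_cast hn_eq
  rw [sum_allocationMatrix hrow hsL, nsmul_eq_mul, nsmul_eq_mul, nsmul_eq_mul,
    Nat.cast_sub hsL, hL]
  push_cast
  rw [hnR]
  field_simp
  ring

/-- Computational redundancy of the deterministic code of Algorithm 1: with `n` odd,
`0 < b < (n-1)/2`, `s = (n-1)/2 - b`, `L = ⌊(n-(2b+1))/(2(b+1))⌋ + 1`, and `G` the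
allocation matrix (identity block on the first `s` rows, `2b+1` ones shifted by `b+1`
on the next `L` rows, all-ones on the remaining rows), the redundancy
`r = (Σᵢⱼ Gᵢⱼ)/n` equals
`(n + (2b+1))/2 - (⌊(n-(2b+1))/(2(b+1))⌋ + 1/2)·(n-(2b+1))/n`. -/
theorem algorithm1_redundancy (n b s L : ℕ) (hn : Odd n)
    (hb0 : 0 < b) (hb : b < (n - 1) / 2)
    (hs : s = (n - 1) / 2 - b)
    (hL : L = (n - (2 * b + 1)) / (2 * (b + 1)) + 1)
    (G : Fin n → Fin n → Bool)
    (hG : ∀ i j : Fin n, G i j =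
      if (i : ℕ) < s then decide ((j : ℕ) = (i : ℕ))
      else if (i : ℕ) < s + L then
        decide (s + ((i : ℕ) - s) * (b + 1) ≤ (j : ℕ) ∧
          (j : ℕ) ≤ s + ((i : ℕ) - s) * (b + 1) + 2 * b)
      else true) :
    (∑ i : Fin n, ∑ j : Fin n, (if G i j = true then (1 : ℝ) else 0)) / n =
      ((n : ℝ) + (2 * b + 1)) / 2 -
        ((((n - (2 * b + 1)) / (2 * (b + 1)) : ℕ) : ℝ) + 1 / 2) *
          ((n : ℝ) - (2 * b + 1)) / n :=
  algorithm1_redundancy_general n b s L hn hb hs hL G hG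
end

section
/- Let m ∈ {0,1}^n with weight (n-1)/2 in the setting of Algorithm 1, and suppose the middle-band set S_{b+1}(m) contains δ ≥ 1 consecutive indices {j, ..., j+δ-1}. Define a_l = Σ_{i=1}^{b} m_{s + (j-s-1+l)(b+1) + i} for l = 0,...,δ (counts of ones in overlapping blocks of width b). If additionally m is zero at the boundary positions m_{s+(j_0-s)(b+1)} for j_0 in the run, then a_{l} + a_{l+1} ≥ b+1 for each l = 0,...,δ-1, and consequently Σ_{l=0}^{δ} a_l ≥ b + δ. -/
/-!
The zero in the middle column of each row of the run splits that row's window of `2b + 1`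
columns into two consecutive overlap blocks, so `a_l + a_{l+1} ≥ b + 1`. As every block has
width `b`, this forces `a_{l+1} ≥ 1`, and the sum is at least `(a_0 + a_1) + (δ - 1)`.
-/

/-- `a_l`: number of ones of `m` in the `l`-th overlap block (of width `b`) of the run
of middle rows starting at row `j₀`, i.e. the columns
`s + (j₀ - s + l)(b+1), …, s + (j₀ - s + l)(b+1) + b - 1`. -/
def blockCount (n b s j₀ : ℕ) (m : Fin n → Bool) (l : ℕ) : ℕ :=
  (Finset.univ.filter fun j : Fin n =>
    s + (j₀ - s + l) * (b + 1) ≤ (j : ℕ) ∧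
    (j : ℕ) < s + (j₀ - s + l) * (b + 1) + b ∧ m j = true).card

open Finset

section OnesCount

variable {n : ℕ} (m : Fin n → Bool)

theorem card_filter_ones_Ico_le (c b : ℕ) :
    #{j : Fin n | c ≤ (j : ℕ) ∧ (j : ℕ) < c + b ∧ m j = true} ≤ b := by
  calc _ ≤ #(Ico c (c + b)) :=
        card_le_card_of_injOn Fin.val (fun j hj => by simp_all) Fin.val_injective.injOn
    _ = b := by simp

theorem card_filter_ones_window_le_of_gap {c c' b : ℕ} (hc' : c' = c + b + 1)
    (hgap : ∀ j : Fin n, (j : ℕ) = c + b → m j = false) :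
    #{j : Fin n | c ≤ (j : ℕ) ∧ (j : ℕ) ≤ c + 2 * b ∧ m j = true} ≤
      #{j : Fin n | c ≤ (j : ℕ) ∧ (j : ℕ) < c + b ∧ m j = true} +
      #{j : Fin n | c' ≤ (j : ℕ) ∧ (j : ℕ) < c' + b ∧ m j = true} := by
  refine (card_le_card fun j hj => ?_).trans (card_union_le _ _)
  simp only [mem_filter, mem_univ, true_and, mem_union] at hj ⊢
  obtain ⟨hcj, hjc, hmj⟩ := hj
  rcases lt_trichotomy (j : ℕ) (c + b) with h | h | h
  · exact Or.inl ⟨hcj, h, hmj⟩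
  · simp [hgap j h] at hmj
  · exact Or.inr ⟨by omega, by omega, hmj⟩

end OnesCount

theorem blockCount_le (n b s j₀ : ℕ) (m : Fin n → Bool) (l : ℕ) :
    blockCount n b s j₀ m l ≤ b :=
  card_filter_ones_Ico_le m _ b

theorem le_blockCount_add_blockCount_succ {n b s j₀ : ℕ} {m : Fin n → Bool} {l : ℕ}
    (hj₀ : s ≤ j₀)
    (hrow : b + 1 ≤ #{j : Fin n | s + (j₀ + l - s) * (b + 1) ≤ (j : ℕ) ∧
        (j : ℕ) ≤ s + (j₀ + l - s) * (b + 1) + 2 * b ∧ m j = true})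
    (hgap : ∀ j : Fin n, (j : ℕ) = s + (j₀ + l - s) * (b + 1) + b → m j = false) :
    b + 1 ≤ blockCount n b s j₀ m l + blockCount n b s j₀ m (l + 1) := by
  rw [show j₀ + l - s = j₀ - s + l by omega] at hrow hgap
  exact hrow.trans (card_filter_ones_window_le_of_gap m (by ring) hgap)

theorem add_le_sum_range_of_le_add_succ {b δ : ℕ} (a : ℕ → ℕ) (hδ : 1 ≤ δ)
    (hle : ∀ l < δ, a l ≤ b) (hadj : ∀ l < δ, b + 1 ≤ a l + a (l + 1)) :
    b + δ ≤ ∑ l ∈ range (δ + 1), a l := by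
  induction δ, hδ using Nat.le_induction with
  | base => simpa [sum_range_succ, add_assoc] using hadj 0 one_pos
  | succ δ hδ ih =>
    have hsum := ih (fun l hl => hle l (by omega)) (fun l hl => hadj l (by omega))
    have hlast := hadj δ (by omega)
    have hprev := hle δ (by omega)
    rw [sum_range_succ]
    omega

theorem overlap_count_bound_general (n b s j₀ δ : ℕ)
    (m : Fin n → Bool)
    (hδ : 1 ≤ δ) (hj₀ : s ≤ j₀)
    (hrun : ∀ r, j₀ ≤ r → r < j₀ + δ →
      b + 1 ≤ (Finset.univ.filter fun j : Fin n =>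
        s + (r - s) * (b + 1) ≤ (j : ℕ) ∧
        (j : ℕ) ≤ s + (r - s) * (b + 1) + 2 * b ∧ m j = true).card)
    (hbnd : ∀ r, j₀ ≤ r → r < j₀ + δ → ∀ j : Fin n,
      (j : ℕ) = s + (r - s) * (b + 1) + b → m j = false) :
    (∀ l, l < δ → b + 1 ≤ blockCount n b s j₀ m l + blockCount n b s j₀ m (l + 1)) ∧
    b + δ ≤ ∑ l ∈ Finset.range (δ + 1), blockCount n b s j₀ m l := by
  have hadj : ∀ l, l < δ → b + 1 ≤ blockCount n b s j₀ m l + blockCount n b s j₀ m (l + 1) :=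
    fun l hl => le_blockCount_add_blockCount_succ hj₀
      (hrun (j₀ + l) (by omega) (by omega)) (hbnd (j₀ + l) (by omega) (by omega))
  exact ⟨hadj, add_le_sum_range_of_le_add_succ _ hδ (fun l _ => blockCount_le n b s j₀ m l) hadj⟩

/-- Overlap-count inequality for the deterministic code: if the middle-band set
`S_{b+1}(m)` contains the `δ ≥ 1` consecutive rows `j₀, …, j₀ + δ - 1` (each such row
`r` covering columns `s + (r-s)(b+1), …, s + (r-s)(b+1) + 2b` and satisfying
`mᵀG(r,:) ≥ b+1`) and `m` vanishes at the boundary columns `s + (r-s)(b+1) + b`, then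
`a_l + a_{l+1} ≥ b + 1` for `l = 0, …, δ-1`, and consequently
`Σ_{l=0}^{δ} a_l ≥ b + δ`. -/
theorem overlap_count_bound (n b s L j₀ δ : ℕ) (hn : Odd n)
    (hb0 : 0 < b) (hb : b < (n - 1) / 2)
    (hs : s = (n - 1) / 2 - b)
    (hL : L = (n - (2 * b + 1)) / (2 * (b + 1)) + 1)
    (m : Fin n → Bool)
    (hwt : (Finset.univ.filter fun i => m i = true).card = (n - 1) / 2)
    (hδ : 1 ≤ δ) (hj₀ : s ≤ j₀) (hjδ : j₀ + δ ≤ s + L)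
    (hrun : ∀ r, j₀ ≤ r → r < j₀ + δ →
      b + 1 ≤ (Finset.univ.filter fun j : Fin n =>
        s + (r - s) * (b + 1) ≤ (j : ℕ) ∧
        (j : ℕ) ≤ s + (r - s) * (b + 1) + 2 * b ∧ m j = true).card)
    (hbnd : ∀ r, j₀ ≤ r → r < j₀ + δ → ∀ j : Fin n,
      (j : ℕ) = s + (r - s) * (b + 1) + b → m j = false) :
    (∀ l, l < δ → b + 1 ≤ blockCount n b s j₀ m l + blockCount n b s j₀ m (l + 1)) ∧
    b + δ ≤ ∑ l ∈ Finset.range (δ + 1), blockCount n b s j₀ m l :=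
  overlap_count_bound_general n b s j₀ δ m hδ hj₀ hrun hbnd
end
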